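/- For all integers r ≥ 1 and n ≥ 1, letting R = (4rn)^{4rn}, we have (R·n)! ≥ (2rn)^{(4rn) · ((4rn)! / (r!)^{2n})}, where the exponent (4rn) · ((4rn)! / (r!)^{2n}) is a natural number (since (r!)^{2n} divides (4rn)!). -/
import Mathlib

/-- `(r!)^k` divides `(r*k)!`. -/
lemma pow_factorial_dvd_aux (r : ℕ) : ∀ k, (r.factorial) ^ k ∣ (r * k).factorial
  | 0 => by simp
  | (k + 1) => by
    rw [pow_succ, mul_comm ((r.factorial) ^ k)]
    calc r.factorial * (r.factorial) ^ k ∣ r.factorial * (r * k).factorial :=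
          mul_dvd_mul_left _ (pow_factorial_dvd_aux r k)
      _ ∣ (r + r * k).factorial := Nat.factorial_mul_factorial_dvd_factorial_add _ _
      _ = (r * (k + 1)).factorial := by ring_nf

/-- `(k+1)! ≤ (k+1)^k`. -/
lemma factorial_le_pow_pred : ∀ k : ℕ, (k + 1).factorial ≤ (k + 1) ^ k
  | 0 => by simp
  | (k + 1) => by
    rw [Nat.factorial_succ, pow_succ, mul_comm ((k + 2) ^ k)]
    exact Nat.mul_le_mul_left _ ((factorial_le_pow_pred k).trans
      (Nat.pow_le_pow_left (by omega) _))

/-- `m * m! ≤ m^m` for `m ≥ 1`. -/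
lemma mul_factorial_le_pow_self (m : ℕ) (h : 1 ≤ m) : m * m.factorial ≤ m ^ m := by
  obtain ⟨k, rfl⟩ : ∃ k, m = k + 1 := ⟨m - 1, by omega⟩
  rw [pow_succ, mul_comm ((k + 1) ^ k)]
  exact Nat.mul_le_mul_left _ (factorial_le_pow_pred k)

/-- If `2 * (c^2 + 1) ≤ m` then `c ^ m < m !`. -/
lemma pow_lt_factorial' (c m : ℕ) (hm : 2 * (c ^ 2 + 1) ≤ m) : c ^ m < m.factorial := by
  obtain ⟨d', rfl⟩ := Nat.exists_eq_add_of_le hm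
  obtain (rfl | c0) := c.eq_zero_or_pos
  · rw [zero_pow (by omega)]
    exact Nat.factorial_pos _
  · have key : c ^ (2 * (c ^ 2 + 1) + d') * c ^ d' = (c ^ 2) ^ (c ^ 2 + d' + 1) := by
      rw [← pow_add, ← pow_mul]; congr 1; ring
    have h1 : c ^ (2 * (c ^ 2 + 1) + d') ≤ (c ^ 2) ^ (c ^ 2 + d' + 1) := by
      rw [← key]; exact Nat.le_mul_of_pos_right _ (Nat.pow_pos c0)
    have h2 : (c ^ 2) ^ (c ^ 2 + d' + 1) < (c ^ 2 + 1) ^ (c ^ 2 + d' + 1) :=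
      Nat.pow_lt_pow_left (Nat.lt_succ_self _) (Nat.succ_ne_zero _)
    have h3 : (c ^ 2 + 1) ^ (c ^ 2 + d' + 1) ≤ (c ^ 2).factorial * (c ^ 2 + 1) ^ (c ^ 2 + d' + 1) :=
      Nat.le_mul_of_pos_left _ (Nat.factorial_pos _)
    have h4 : (c ^ 2).factorial * (c ^ 2 + 1) ^ (c ^ 2 + d' + 1) ≤
        (c ^ 2 + (c ^ 2 + d' + 1)).factorial := Nat.factorial_mul_pow_le_factorial
    have h5 : (c ^ 2 + (c ^ 2 + d' + 1)).factorial ≤ (2 * (c ^ 2 + 1) + d').factorial :=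
      Nat.factorial_le (by omega)
    exact lt_of_le_of_lt h1 (lt_of_lt_of_le h2 (le_trans h3 (le_trans h4 h5)))

/-- For all integers `r ≥ 1` and `n ≥ 1`, letting `R = (4rn)^(4rn)`, we have
`(R·n)! ≥ (2rn)^((4rn) · ((4rn)!/(r!)^(2n)))`; moreover the exponent is a genuine
natural number since `(r!)^(2n)` divides `(4rn)!`. -/
theorem factorial_ge_scheduler_count (r n : ℕ) (hr : 1 ≤ r) (hn : 1 ≤ n) :
    (r.factorial) ^ (2 * n) ∣ (4 * r * n).factorial ∧
    (2 * r * n) ^ ((4 * r * n) * ((4 * r * n).factorial / (r.factorial) ^ (2 * n))) ≤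
      (((4 * r * n) ^ (4 * r * n)) * n).factorial := by
  have hm4 : 4 ≤ 4 * r * n := by nlinarith
  have hm1 : 1 ≤ 4 * r * n := by omega
  constructor
  · calc (r.factorial) ^ (2 * n) ∣ (r * (2 * n)).factorial := pow_factorial_dvd_aux r (2 * n)
      _ ∣ (4 * r * n).factorial := Nat.factorial_dvd_factorial (by nlinarith)
  · set m := 4 * r * n with hm
    have hE : m.factorial / (r.factorial) ^ (2 * n) ≤ m.factorial := Nat.div_le_self _ _
    have hexp : m * (m.factorial / (r.factorial) ^ (2 * n)) ≤ m ^ m :=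
      (Nat.mul_le_mul_left m hE).trans (mul_factorial_le_pow_self m hm1)
    calc (2 * r * n) ^ (m * (m.factorial / (r.factorial) ^ (2 * n)))
        ≤ m ^ (m * (m.factorial / (r.factorial) ^ (2 * n))) :=
          Nat.pow_le_pow_left (Nat.mul_le_mul_right n (by omega)) _
      _ ≤ m ^ (m ^ m) := Nat.pow_le_pow_right hm1 hexp
      _ ≤ (m ^ m).factorial := by
          refine le_of_lt (pow_lt_factorial' m (m ^ m) ?_)
          calc 2 * (m ^ 2 + 1) ≤ 4 * m ^ 2 := by nlinarith
            _ ≤ m ^ 2 * m ^ 2 := Nat.mul_le_mul_right _ (by nlinarith)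
            _ = m ^ 4 := by ring
            _ ≤ m ^ m := Nat.pow_le_pow_right hm1 hm4
      _ ≤ (m ^ m * n).factorial := Nat.factorial_le (Nat.le_mul_of_pos_right _ (by omega))
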